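/- Let s ≥ 0 be an integer. For every fractional allocation of the jobs among the n machines with at most s split jobs whose makespan B satisfies B ≠ S and B ≠ q/r_i for every integer q and every machine i, there exists a fractional allocation with at most s split jobs whose makespan is strictly smaller than B. (Consequently, any allocation minimizing the makespan among allocations with at most s split jobs is either perfect or has makespan of the form q/r_i with q an integer.) -/

import Mathlib

/-!
Put `c i = B * r i`. Since `B ≠ S`, the loads cannot all equal their capacities `c i`, so some
machine is strictly below `B`. A machine at exactly `B` carries a non-integral load, hence some
already split job has part of its mass on it; moving a little of that mass to a machine below `B`
lowers the number of machines at `B` without creating a new split job. Repeating this brings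
every machine strictly below `B`.
-/

open Finset

namespace Scheduling

variable {ι κ K : Type*}

def load [Fintype ι] [AddCommMonoid K] (f : ι → κ → K) (i : κ) : K := ∑ j, f j i

def splitJobs [Fintype ι] [Fintype κ] [Zero K] [LT K] [DecidableLT K] (f : ι → κ → K) :
    Finset ι :=
  univ.filter fun j => 1 < #(univ.filter fun i => 0 < f j i)

theorem mem_splitJobs [Fintype ι] [Fintype κ] [Zero K] [LT K] [DecidableLT K]
    {f : ι → κ → K} {j : ι} :
    j ∈ splitJobs f ↔ 1 < #(univ.filter fun i => 0 < f j i) := by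
  simp [splitJobs]

def tightMachines [Fintype ι] [Fintype κ] [AddCommMonoid K] [DecidableEq K] (f : ι → κ → K)
    (c : κ → K) : Finset κ :=
  univ.filter fun i => load f i = c i

theorem mem_tightMachines [Fintype ι] [Fintype κ] [AddCommMonoid K] [DecidableEq K]
    {f : ι → κ → K} {c : κ → K} {i : κ} : i ∈ tightMachines f c ↔ load f i = c i := by
  simp [tightMachines]

structure IsAllocation [Fintype κ] [Semiring K] [LE K] (x : ι → ℕ) (f : ι → κ → K) :
    Prop where
  nonneg : ∀ j i, 0 ≤ f j i
  sum_eq : ∀ j, ∑ i, f j i = x j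

theorem sum_load [Fintype ι] [Fintype κ] [Semiring K] [LE K] {x : ι → ℕ}
    {f : ι → κ → K} (hf : IsAllocation x f) : ∑ i, load f i = ∑ j, (x j : K) := by
  simp only [load]
  rw [sum_comm]
  exact sum_congr rfl fun j _ => hf.sum_eq j

theorem sum_eq_of_notMem_splitJobs [Fintype ι] [Fintype κ] [AddCommMonoid K] [LinearOrder K]
    {f : ι → κ → K} {j : ι} {i : κ} (hf0 : ∀ i, 0 ≤ f j i) (hj : j ∉ splitJobs f)
    (hpos : 0 < f j i) : ∑ i', f j i' = f j i := by
  have hsupp : #(univ.filter fun i => 0 < f j i) ≤ 1 := by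
    simpa [mem_splitJobs] using hj
  refine sum_eq_single i (fun b _ hb => ?_) (by simp)
  by_contra hb0
  exact hb (card_le_one.1 hsupp b (by simpa using (hf0 b).lt_of_ne' hb0) i (by simpa using hpos))

/-- A machine whose jobs are all unsplit carries the full length of each of them, so its load
is a natural number. -/
theorem exists_mem_splitJobs_of_load_ne_natCast [Fintype ι] [Fintype κ] [Semiring K]
    [LinearOrder K] {x : ι → ℕ} {f : ι → κ → K}
    (hf : IsAllocation x f) {i : κ} (hi : ∀ q : ℕ, load f i ≠ q) :
    ∃ j ∈ splitJobs f, 0 < f j i := by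
  by_contra! hunsplit
  apply hi (∑ j ∈ univ.filter fun j => 0 < f j i, x j)
  have hwhole : ∀ j ∈ univ.filter fun j => 0 < f j i, f j i = x j := fun j hj => by
    have hpos : 0 < f j i := by simpa using hj
    have hj' : j ∉ splitJobs f := fun h => (hunsplit j h).not_gt hpos
    rw [← hf.sum_eq j, sum_eq_of_notMem_splitJobs (hf.nonneg j) hj' hpos]
  calc load f i = ∑ j ∈ univ.filter fun j => 0 < f j i, f j i :=
        (sum_filter_of_ne fun j _ h => (hf.nonneg j i).lt_of_ne' h).symm
    _ = _ := by rw [sum_congr rfl hwhole]; push_cast; rfl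

section Transfer

variable [DecidableEq ι] [DecidableEq κ]

def transfer [AddCommGroup K] (f : ι → κ → K) (j : ι) (src dst : κ) (ε : K) :
    ι → κ → K :=
  f + Pi.single j (Pi.single dst ε - Pi.single src ε)

theorem load_transfer [Fintype ι] [AddCommGroup K] (f : ι → κ → K) (j : ι) (src dst i : κ)
    (ε : K) : load (transfer f j src dst ε) i =
      load f i + (Pi.single dst ε - Pi.single src ε : κ → K) i := by
  simp only [load, transfer, Pi.add_apply, sum_add_distrib, ← Finset.sum_apply, sum_pi_single',
    if_pos (mem_univ j)]

theorem isAllocation_transfer [Fintype κ] [Field K] [LinearOrder K] [IsStrictOrderedRing K]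
    {x : ι → ℕ} {f : ι → κ → K} (hf : IsAllocation x f) {j : ι} {src dst : κ} {ε : K}
    (hε : 0 ≤ ε) (hεf : ε ≤ f j src) :
    IsAllocation x (transfer f j src dst ε) where
  nonneg j' i := by
    have := hf.nonneg j' i
    rcases eq_or_ne j' j with rfl | hj
    · simp only [transfer, Pi.add_apply, Pi.single_eq_same, Pi.sub_apply, Pi.single_apply]
      split_ifs <;> subst_vars <;> linarith
    · simpa [transfer, hj]
  sum_eq j' := by
    rw [← hf.sum_eq j']
    rcases eq_or_ne j' j with rfl | hj
    · simp [transfer, sum_add_distrib, sum_sub_distrib]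
    · simp [transfer, hj]

theorem splitJobs_transfer_subset [Fintype ι] [Fintype κ] [AddCommGroup K] [LinearOrder K]
    (f : ι → κ → K) (j : ι) (src dst : κ) (ε : K) :
    splitJobs (transfer f j src dst ε) ⊆ insert j (splitJobs f) := by
  intro j' hj'
  rcases eq_or_ne j' j with rfl | hj
  · exact mem_insert_self _ _
  · refine mem_insert_of_mem ?_
    simpa [mem_splitJobs, transfer, hj] using hj'

variable [Fintype ι] [Fintype κ] [Field K] [LinearOrder K] [IsStrictOrderedRing K] {c : κ → K}

theorem exists_transfer_tightMachines_ssubset {x : ι → ℕ} {f : ι → κ → K}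
    (hf : IsAllocation x f) (hc : ∀ i (q : ℕ), c i ≠ q) (hle : ∀ i, load f i ≤ c i)
    {i₀ i₁ : κ} (hi₀ : load f i₀ < c i₀) (hi₁ : i₁ ∈ tightMachines f c) :
    ∃ g, IsAllocation x g ∧ splitJobs g ⊆ splitJobs f ∧ (∀ i, load g i ≤ c i) ∧
      load g i₀ < c i₀ ∧ tightMachines g c ⊂ tightMachines f c := by
  have hi₁' : load f i₁ = c i₁ := mem_tightMachines.1 hi₁
  have h01 : i₀ ≠ i₁ := by rintro rfl; exact hi₀.ne hi₁'
  obtain ⟨j, hj, hpos⟩ := exists_mem_splitJobs_of_load_ne_natCast hf (hi₁' ▸ hc i₁)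
  set ε := min (f j i₁) ((c i₀ - load f i₀) / 2)
  have hε : 0 < ε := lt_min hpos (by linarith)
  have hεgap : ε < c i₀ - load f i₀ := (min_le_right _ _).trans_lt (by linarith)
  set g := transfer f j i₁ i₀ ε
  have hload : ∀ i,
      load g i = load f i + (if i = i₀ then ε else 0) - (if i = i₁ then ε else 0) :=
    fun i => by simp [g, load_transfer, Pi.single_apply, add_sub_assoc]
  have hg₀ : load g i₀ < c i₀ := by rw [hload]; simp [h01]; linarith
  have hg₁ : load g i₁ < c i₁ := by rw [hload]; simp [h01.symm]; linarith
  refine ⟨g, isAllocation_transfer hf hε.le (min_le_left _ _), ?_, fun i => ?_, hg₀, ?_⟩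
  · exact (splitJobs_transfer_subset f j i₁ i₀ ε).trans (insert_eq_of_mem hj).le
  · by_cases h0 : i = i₀
    · exact h0 ▸ hg₀.le
    by_cases h1 : i = i₁
    · exact h1 ▸ hg₁.le
    simpa [hload, h0, h1] using hle i
  · refine (show tightMachines g c ⊆ (tightMachines f c).erase i₁ from fun i hi => ?_
      ).trans_ssubset (erase_ssubset hi₁)
    rw [mem_tightMachines] at hi
    have h0 : i ≠ i₀ := by rintro rfl; exact hg₀.ne hi
    have h1 : i ≠ i₁ := by rintro rfl; exact hg₁.ne hi
    simpa [mem_tightMachines, h1, hload, h0] using hi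

theorem exists_forall_load_lt {x : ι → ℕ} {f : ι → κ → K} (hf : IsAllocation x f)
    (hc : ∀ i (q : ℕ), c i ≠ q) (hle : ∀ i, load f i ≤ c i) {i₀ : κ}
    (hi₀ : load f i₀ < c i₀) :
    ∃ g, IsAllocation x g ∧ splitJobs g ⊆ splitJobs f ∧ ∀ i, load g i < c i := by
  obtain hempty | ⟨i₁, hi₁⟩ := (tightMachines f c).eq_empty_or_nonempty
  · exact ⟨f, hf, subset_rfl, fun i => (hle i).lt_of_ne fun h =>
      notMem_empty i (hempty ▸ mem_tightMachines.2 h)⟩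
  · obtain ⟨g, hg, hsub, hgle, hg₀, hfewer⟩ :=
      exists_transfer_tightMachines_ssubset hf hc hle hi₀ hi₁
    obtain ⟨g', hg', hsub', hlt⟩ := exists_forall_load_lt hg hc hgle hg₀
    exact ⟨g', hg', hsub'.trans hsub, hlt⟩
termination_by #(tightMachines f c)
decreasing_by exact card_lt_card hfewer

end Transfer

end Scheduling

open Scheduling in
theorem stmt_12_general (m n s : ℕ) (hn : 0 < n)
    (x : Fin m → ℕ)
    (r : Fin n → ℕ) (hr : ∀ i, 0 < r i)
    (S : ℚ) (hS : S = (∑ j, (x j : ℚ)) / ((∑ i, r i : ℕ) : ℚ))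
    (f : Fin m → Fin n → ℚ) (hf0 : ∀ j i, 0 ≤ f j i)
    (hfsum : ∀ j, ∑ i, f j i = (x j : ℚ))
    (hsplit : (Finset.univ.filter (fun j =>
        1 < (Finset.univ.filter (fun i => 0 < f j i)).card)).card ≤ s)
    (B : ℚ)
    (hBub : ∀ i, (∑ j, f j i) / (r i : ℚ) ≤ B)
    (hBS : B ≠ S)
    (hBq : ∀ (q : ℤ) (i : Fin n), B ≠ (q : ℚ) / (r i : ℚ)) :
    ∃ f' : Fin m → Fin n → ℚ,
      (∀ j i, 0 ≤ f' j i) ∧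
      (∀ j, ∑ i, f' j i = (x j : ℚ)) ∧
      (Finset.univ.filter (fun j =>
          1 < (Finset.univ.filter (fun i => 0 < f' j i)).card)).card ≤ s ∧
      (∀ i, (∑ j, f' j i) / (r i : ℚ) < B) := by
  have hf : IsAllocation x f := ⟨hf0, hfsum⟩
  have hrpos : ∀ i, (0 : ℚ) < r i := fun i => mod_cast hr i
  have hle : ∀ i, load f i ≤ B * r i := fun i => (div_le_iff₀ (hrpos i)).1 (hBub i)
  have hc : ∀ i (q : ℕ), B * r i ≠ q := fun i q h =>
    hBq q i (by rw [eq_div_iff (hrpos i).ne', h]; rfl)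
  have hA : (0 : ℚ) < ((∑ i, r i : ℕ) : ℚ) :=
    mod_cast sum_pos (fun i _ => hr i) (univ_nonempty_iff.2 (Fin.pos_iff_nonempty.1 hn))
  have hcap : ∑ i, load f i < ∑ i, B * r i := by
    refine (sum_le_sum fun i _ => hle i).lt_of_ne ?_
    rw [sum_load hf, ← mul_sum]
    intro h
    exact hBS (by rw [hS, eq_div_iff hA.ne', h]; push_cast; rfl)
  obtain ⟨i₀, -, hi₀⟩ := exists_lt_of_sum_lt hcap
  obtain ⟨g, hg, hsub, hlt⟩ := exists_forall_load_lt hf hc hle hi₀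
  exact ⟨g, hg.nonneg, hg.sum_eq, (card_le_card hsub).trans hsplit,
    fun i => (div_lt_iff₀ (hrpos i)).2 (hlt i)⟩

/-- if an allocation with at most `s` split jobs has makespan `B` with `B ≠ S`
and `B ≠ q / r i` for every integer `q` and machine `i`, then there is an allocation with at
most `s` split jobs and strictly smaller makespan. -/
theorem stmt_12 (m n s : ℕ) (hn : 0 < n)
    (x : Fin m → ℕ) (hx : ∀ j, 0 < x j)
    (r : Fin n → ℕ) (hr : ∀ i, 0 < r i)
    (S : ℚ) (hS : S = (∑ j, (x j : ℚ)) / ((∑ i, r i : ℕ) : ℚ))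
    (f : Fin m → Fin n → ℚ) (hf0 : ∀ j i, 0 ≤ f j i)
    (hfsum : ∀ j, ∑ i, f j i = (x j : ℚ))
    (hsplit : (Finset.univ.filter (fun j =>
        1 < (Finset.univ.filter (fun i => 0 < f j i)).card)).card ≤ s)
    (B : ℚ)
    (hBub : ∀ i, (∑ j, f j i) / (r i : ℚ) ≤ B)
    (hBmem : ∃ i, (∑ j, f j i) / (r i : ℚ) = B)
    (hBS : B ≠ S)
    (hBq : ∀ (q : ℤ) (i : Fin n), B ≠ (q : ℚ) / (r i : ℚ)) :
    ∃ f' : Fin m → Fin n → ℚ,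
      (∀ j i, 0 ≤ f' j i) ∧
      (∀ j, ∑ i, f' j i = (x j : ℚ)) ∧
      (Finset.univ.filter (fun j =>
          1 < (Finset.univ.filter (fun i => 0 < f' j i)).card)).card ≤ s ∧
      (∀ i, (∑ j, f' j i) / (r i : ℚ) < B) :=
  stmt_12_general m n s hn x r hr S hS f hf0 hfsum hsplit B hBub hBS hBq
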